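/- Let T_n be a strongly connected arc-colored tournament of order n with Δ^{-mon}(T_n) ≤ Δ^{+mon}(T_n), and suppose that 1 ≤ i(T_n) < (n+3)/3. If 2·Δ^{-mon}(T_n) + Δ^{+mon}(T_n) ≤ (n−1−i(T_n))·(n+1−i(T_n)) / (4·(n−1+i(T_n))), then every vertex of T_n is contained in a rainbow triangle. -/

import Mathlib

open Finset

/-- A tournament on vertex type `V`: between every two distinct vertices there is
exactly one arc, and there are no loops. -/
structure Tournament (V : Type) where
  arc : V → V → Bool
  irrefl : ∀ v, arc v v = false
  oneArc : ∀ u v : V, u ≠ v → arc u v = !arc v u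

namespace Tournament

variable {V : Type} [Fintype V]

/-- Outdegree `d⁺(v)`. -/
def outDeg (T : Tournament V) (v : V) : ℕ :=
  (univ.filter fun w => T.arc v w).card

/-- Indegree `d⁻(v)`. -/
def inDeg (T : Tournament V) (v : V) : ℕ :=
  (univ.filter fun u => T.arc u v).card

/-- `δ(v) = min{d⁺(v), d⁻(v)}`. -/
def minDeg (T : Tournament V) (v : V) : ℕ :=
  min (T.outDeg v) (T.inDeg v)

/-- The irregularity `i(T)`: the maximum of `|d⁺(v) − d⁻(v)|` over all vertices. -/
def irreg (T : Tournament V) : ℕ :=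
  univ.sup fun v => ((T.outDeg v : ℤ) - (T.inDeg v : ℤ)).natAbs

/-- Strong connectivity: every vertex can reach every other vertex by a directed path. -/
def StronglyConnected (T : Tournament V) : Prop :=
  ∀ u v : V, Relation.ReflTransGen (fun a b => T.arc a b) u v

/-- The number of in-arcs of `v` with color `c`. -/
def monoInDeg (T : Tournament V) (C : V → V → ℕ) (v : V) (c : ℕ) : ℕ :=
  (univ.filter fun u => T.arc u v ∧ C u v = c).card

/-- The number of out-arcs of `v` with color `c`. -/
def monoOutDeg (T : Tournament V) (C : V → V → ℕ) (v : V) (c : ℕ) : ℕ :=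
  (univ.filter fun w => T.arc v w ∧ C v w = c).card

/-- The maximum monochromatic indegree `Δ^{-mon}(T)`. -/
def maxMonoIn (T : Tournament V) (C : V → V → ℕ) : ℕ :=
  univ.sup fun v => (univ.image fun u => C u v).sup (T.monoInDeg C v)

/-- The maximum monochromatic outdegree `Δ^{+mon}(T)`. -/
def maxMonoOut (T : Tournament V) (C : V → V → ℕ) : ℕ :=
  univ.sup fun v => (univ.image fun w => C v w).sup (T.monoOutDeg C v)

/-- The directed triangles through `v`, encoded as ordered pairs `(w, u)` with
arcs `v → w → u → v`.  This gives each triangle through `v` exactly once. -/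
def trianglesThrough (T : Tournament V) (v : V) : Finset (V × V) :=
  univ.filter fun p => T.arc v p.1 ∧ T.arc p.1 p.2 ∧ T.arc p.2 v

/-- The rainbow triangles through `v`: all three arcs have pairwise distinct colors. -/
def rainbowTrianglesThrough (T : Tournament V) (C : V → V → ℕ) (v : V) : Finset (V × V) :=
  (T.trianglesThrough v).filter fun p =>
    C v p.1 ≠ C p.1 p.2 ∧ C p.1 p.2 ≠ C p.2 v ∧ C p.2 v ≠ C v p.1

/-- The non-rainbow triangles through `v`: some two arcs share a color. -/
def nonRainbowTrianglesThrough (T : Tournament V) (C : V → V → ℕ) (v : V) : Finset (V × V) :=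
  (T.trianglesThrough v).filter fun p =>
    ¬(C v p.1 ≠ C p.1 p.2 ∧ C p.1 p.2 ≠ C p.2 v ∧ C p.2 v ≠ C v p.1)

/-- Ordered triples `(x, y, z)` with arcs `x → y → z → x`.  Each directed triangle
is counted exactly three times (once per cyclic rotation). -/
def triangleTriples (T : Tournament V) : Finset (V × V × V) :=
  univ.filter fun p => T.arc p.1 p.2.1 ∧ T.arc p.2.1 p.2.2 ∧ T.arc p.2.2 p.1

/-- Ordered triples representing rainbow triangles (each rainbow triangle thrice). -/
def rainbowTriples (T : Tournament V) (C : V → V → ℕ) : Finset (V × V × V) :=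
  T.triangleTriples.filter fun p =>
    C p.1 p.2.1 ≠ C p.2.1 p.2.2 ∧ C p.2.1 p.2.2 ≠ C p.2.2 p.1 ∧ C p.2.2 p.1 ≠ C p.1 p.2.1

/-- Ordered triples representing non-rainbow triangles (each such triangle thrice). -/
def nonRainbowTriples (T : Tournament V) (C : V → V → ℕ) : Finset (V × V × V) :=
  T.triangleTriples.filter fun p =>
    ¬(C p.1 p.2.1 ≠ C p.2.1 p.2.2 ∧ C p.2.1 p.2.2 ≠ C p.2.2 p.1 ∧ C p.2.2 p.1 ≠ C p.1 p.2.1)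

end Tournament

/-!
Fix a vertex `v` and write `x = d⁺(v)`, `y = d⁻(v)`, `a = Δ^{-mon}`, `b = Δ^{+mon}`, `i = i(T)`,
and `t` for the number of triangles through `v`. Every degree is at least `(n - 1 - i) / 2`.
The out-arcs of `N⁺(v)` either stay inside it (`C(x, 2)` of them) or close a triangle through `v`,
so `t = ∑_{w ∈ N⁺(v)} d⁺(w) - C(x, 2) ≥ x (n - i - x) / 2`, and dually `t ≥ y (n - i - y) / 2`.
A non-rainbow triangle `v → w → u → v` has two arcs of the same color meeting at `w`, `u` or `v`;
counting by that vertex gives at most `b x + a y + a x` of them. For `1 ≤ i < (n + 3) / 3` the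
bound on `2a + b` makes the first estimate exceed the second, so `v` lies on a rainbow triangle.
-/

theorem Finset.card_filter_product {α β : Type*} (s : Finset α) (t : Finset β) (r : α → β → Prop)
    [∀ a b, Decidable (r a b)] :
    #{p ∈ s ×ˢ t | r p.1 p.2} = ∑ a ∈ s, #{b ∈ t | r a b} := by
  simp only [card_filter, sum_product]

theorem Finset.card_le_mul_card_of_injOn_fibers {γ α β : Type*} [DecidableEq α] {s : Finset γ}
    {t : Finset α} {M : α → Finset β} {k : ℕ} (f : γ → α) (g : γ → β)
    (hs : ∀ x ∈ s, f x ∈ t ∧ g x ∈ M (f x)) (hinj : Set.InjOn (fun x => (f x, g x)) s)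
    (hM : ∀ a ∈ t, #(M a) ≤ k) : #s ≤ k * #t := by
  refine card_le_mul_card_image_of_maps_to (fun x hx => (hs x hx).1) k fun a ha => ?_
  refine (card_le_card_of_injOn g (fun x hx => ?_) fun x hx y hy hxy => ?_).trans (hM a ha)
  · obtain ⟨hxs, rfl⟩ := mem_filter.mp hx
    exact (hs x hxs).2
  · obtain ⟨hxs, rfl⟩ := mem_filter.mp hx
    obtain ⟨hys, hfy⟩ := mem_filter.mp hy
    exact hinj hxs hys (Prod.ext hfy.symm hxy)

namespace Tournament

section Arcs

variable {V : Type} (T : Tournament V) {u v : V}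

theorem ne_of_arc (h : T.arc u v) : u ≠ v := by
  rintro rfl
  simp [T.irrefl] at h

theorem arc_asymm (h : T.arc u v) : ¬T.arc v u := by
  have := T.oneArc u v (T.ne_of_arc h)
  simp_all

theorem arc_or_arc_of_ne (h : u ≠ v) : T.arc u v ∨ T.arc v u := by
  cases huv : T.arc u v <;> simp_all [T.oneArc u v h]

theorem not_arc_iff (h : u ≠ v) : ¬T.arc u v ↔ T.arc v u :=
  ⟨(T.arc_or_arc_of_ne h).resolve_left, T.arc_asymm⟩

def reverse : Tournament V where
  arc u v := T.arc v u
  irrefl := T.irrefl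
  oneArc u v h := T.oneArc v u h.symm

theorem card_arcs_within [DecidableEq V] (S : Finset V) :
    #{p ∈ S ×ˢ S | T.arc p.1 p.2} = (#S).choose 2 := by
  have hswap : #{p ∈ S ×ˢ S | T.arc p.1 p.2} = #{p ∈ S ×ˢ S | T.arc p.2 p.1} :=
    card_equiv (Equiv.prodComm V V) fun p => by simp [and_comm]
  have hsplit : S.offDiag = {p ∈ S ×ˢ S | T.arc p.1 p.2} ∪ {p ∈ S ×ˢ S | T.arc p.2 p.1} := by
    ext p
    simp only [mem_offDiag, mem_union, mem_filter, mem_product]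
    constructor
    · rintro ⟨hp1, hp2, hne⟩
      exact (T.arc_or_arc_of_ne hne).imp (⟨⟨hp1, hp2⟩, ·⟩) (⟨⟨hp1, hp2⟩, ·⟩)
    · rintro (⟨hp, h⟩ | ⟨hp, h⟩)
      exacts [⟨hp.1, hp.2, T.ne_of_arc h⟩, ⟨hp.1, hp.2, (T.ne_of_arc h).symm⟩]
  have hdisj : Disjoint {p ∈ S ×ˢ S | T.arc p.1 p.2} {p ∈ S ×ˢ S | T.arc p.2 p.1} :=
    disjoint_filter.mpr fun p _ => T.arc_asymm
  have hcard := congrArg card hsplit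
  rw [card_union_of_disjoint hdisj, offDiag_card, ← hswap, ← Nat.mul_sub_one] at hcard
  rw [Nat.choose_two_right]
  omega

end Arcs

variable {V : Type} [Fintype V] (T : Tournament V) (C : V → V → ℕ)

theorem outDeg_add_inDeg (v : V) : T.outDeg v + T.inDeg v + 1 = Fintype.card V := by
  classical
  have hcompl : (univ.filter fun w => ¬T.arc v w) = insert v (univ.filter fun u => T.arc u v) := by
    ext w
    by_cases hw : w = v
    · simp [hw, T.irrefl]
    · simp only [mem_filter, mem_univ, true_and, mem_insert, hw, false_or]
      exact T.not_arc_iff (Ne.symm hw)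
  rw [outDeg, inDeg, ← card_univ,
    ← card_filter_add_card_filter_not (s := univ) (fun w => T.arc v w), hcompl,
    card_insert_of_notMem (by simp [T.irrefl]), add_assoc]

theorem outDeg_reverse (v : V) : T.reverse.outDeg v = T.inDeg v := rfl

theorem card_trianglesThrough_reverse (v : V) :
    #(T.reverse.trianglesThrough v) = #(T.trianglesThrough v) :=
  card_equiv (Equiv.prodComm V V) fun p => by
    simp only [trianglesThrough, mem_filter, mem_univ, true_and]
    simp only [reverse, Equiv.prodComm_apply, Prod.fst_swap, Prod.snd_swap]
    tauto

theorem abs_outDeg_sub_inDeg_le_irreg (v : V) : |(T.outDeg v : ℚ) - T.inDeg v| ≤ T.irreg := by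
  have h : ((T.outDeg v : ℤ) - T.inDeg v).natAbs ≤ T.irreg :=
    le_sup (f := fun v => ((T.outDeg v : ℤ) - T.inDeg v).natAbs) (mem_univ v)
  have : |(T.outDeg v : ℤ) - T.inDeg v| ≤ T.irreg := by rw [Int.abs_eq_natAbs]; exact_mod_cast h
  exact_mod_cast this

theorem card_sub_irreg_le_two_mul_outDeg (v : V) :
    (Fintype.card V : ℚ) - 1 - T.irreg ≤ 2 * T.outDeg v := by
  have hsum : (T.outDeg v : ℚ) + T.inDeg v + 1 = Fintype.card V := by
    exact_mod_cast T.outDeg_add_inDeg v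
  linarith [(abs_le.mp (T.abs_outDeg_sub_inDeg_le_irreg v)).1]

theorem card_sub_irreg_le_two_mul_inDeg (v : V) :
    (Fintype.card V : ℚ) - 1 - T.irreg ≤ 2 * T.inDeg v := by
  have hsum : (T.outDeg v : ℚ) + T.inDeg v + 1 = Fintype.card V := by
    exact_mod_cast T.outDeg_add_inDeg v
  linarith [(abs_le.mp (T.abs_outDeg_sub_inDeg_le_irreg v)).2]

theorem exists_arc_of_irreg_pos (h : 0 < T.irreg) : ∃ u w, T.arc u w := by
  by_contra! hno
  simp [irreg, outDeg, inDeg, hno] at h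

def outNbhd (v : V) : Finset V := {w | T.arc v w}

@[simp] theorem mem_outNbhd {v w : V} : w ∈ T.outNbhd v ↔ T.arc v w := by simp [outNbhd]

theorem card_outNbhd (v : V) : #(T.outNbhd v) = T.outDeg v := rfl

theorem sum_outDeg_eq_choose_add_arcs_leaving [DecidableEq V] (S : Finset V) :
    ∑ w ∈ S, T.outDeg w = (#S).choose 2 + #{p ∈ S ×ˢ Sᶜ | T.arc p.1 p.2} := by
  rw [← T.card_arcs_within, card_filter_product S S fun w u => T.arc w u,
    card_filter_product S Sᶜ fun w u => T.arc w u, ← sum_add_distrib]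
  refine sum_congr rfl fun w _ => ?_
  rw [← card_union_of_disjoint (disjoint_filter_filter disjoint_compl_right), ← filter_union,
    union_compl]
  rfl

theorem trianglesThrough_eq_arcs_leaving_outNbhd [DecidableEq V] (v : V) :
    T.trianglesThrough v = {p ∈ T.outNbhd v ×ˢ (T.outNbhd v)ᶜ | T.arc p.1 p.2} := by
  ext ⟨w, u⟩
  simp only [trianglesThrough, mem_filter, mem_univ, true_and, mem_product, mem_compl,
    mem_outNbhd]
  constructor
  · rintro ⟨hvw, hwu, huv⟩
    exact ⟨⟨hvw, T.arc_asymm huv⟩, hwu⟩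
  · rintro ⟨⟨hvw, hvu⟩, hwu⟩
    have huv : u ≠ v := by
      rintro rfl
      exact T.arc_asymm hvw hwu
    exact ⟨hvw, hwu, (T.not_arc_iff huv.symm).mp hvu⟩

theorem card_trianglesThrough_add_choose (v : V) :
    #(T.trianglesThrough v) + (T.outDeg v).choose 2 = ∑ w ∈ T.outNbhd v, T.outDeg w := by
  classical
  rw [T.sum_outDeg_eq_choose_add_arcs_leaving, T.trianglesThrough_eq_arcs_leaving_outNbhd,
    card_outNbhd, add_comm]

theorem outDeg_mul_le_two_mul_card_trianglesThrough {δ : ℚ} (hδ : ∀ w, δ ≤ 2 * T.outDeg w)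
    (v : V) : (T.outDeg v : ℚ) * (δ + 1 - T.outDeg v) ≤ 2 * #(T.trianglesThrough v) := by
  have hsum : (T.outDeg v : ℚ) * δ ≤ ∑ w ∈ T.outNbhd v, (2 * T.outDeg w : ℚ) := by
    simpa [card_outNbhd] using card_nsmul_le_sum (T.outNbhd v) _ δ fun w _ => hδ w
  have hcount : (#(T.trianglesThrough v) : ℚ) + T.outDeg v * (T.outDeg v - 1) / 2
      = ∑ w ∈ T.outNbhd v, (T.outDeg w : ℚ) := by
    rw [← Nat.cast_choose_two]
    exact_mod_cast T.card_trianglesThrough_add_choose v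
  rw [← mul_sum] at hsum
  linarith

theorem inDeg_mul_le_two_mul_card_trianglesThrough {δ : ℚ} (hδ : ∀ w, δ ≤ 2 * T.inDeg w)
    (v : V) : (T.inDeg v : ℚ) * (δ + 1 - T.inDeg v) ≤ 2 * #(T.trianglesThrough v) := by
  simpa [outDeg_reverse, card_trianglesThrough_reverse] using
    T.reverse.outDeg_mul_le_two_mul_card_trianglesThrough hδ v

theorem monoOutDeg_le_maxMonoOut (w : V) (c : ℕ) : T.monoOutDeg C w c ≤ T.maxMonoOut C := by
  classical
  obtain h | ⟨u, hu⟩ := ({u | T.arc w u ∧ C w u = c} : Finset V).eq_empty_or_nonempty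
  · simp [monoOutDeg, h]
  · have hc : c ∈ univ.image fun u => C w u := mem_image.mpr ⟨u, mem_univ u, (mem_filter.mp hu).2.2⟩
    exact (le_sup hc).trans
      (le_sup (f := fun v => (univ.image fun u => C v u).sup (T.monoOutDeg C v)) (mem_univ w))

theorem monoInDeg_le_maxMonoIn (w : V) (c : ℕ) : T.monoInDeg C w c ≤ T.maxMonoIn C := by
  classical
  obtain h | ⟨u, hu⟩ := ({u | T.arc u w ∧ C u w = c} : Finset V).eq_empty_or_nonempty
  · simp [monoInDeg, h]
  · have hc : c ∈ univ.image fun u => C u w := mem_image.mpr ⟨u, mem_univ u, (mem_filter.mp hu).2.2⟩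
    exact (le_sup hc).trans
      (le_sup (f := fun v => (univ.image fun u => C u v).sup (T.monoInDeg C v)) (mem_univ w))

theorem one_le_maxMonoIn_of_arc {u w : V} (h : T.arc u w) : 1 ≤ T.maxMonoIn C := by
  have : 0 < T.monoInDeg C w (C u w) := card_pos.mpr ⟨u, by simp [h]⟩
  exact this.trans_le (T.monoInDeg_le_maxMonoIn C w _)

theorem card_nonRainbowTrianglesThrough_le (v : V) :
    #(T.nonRainbowTrianglesThrough C v) ≤
      T.maxMonoOut C * T.outDeg v + T.maxMonoIn C * T.inDeg v + T.maxMonoIn C * T.outDeg v := by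
  classical
  set tri := T.trianglesThrough v
  have hmem {p : V × V} (hp : p ∈ tri) : T.arc v p.1 ∧ T.arc p.1 p.2 ∧ T.arc p.2 v := by
    simpa [tri, trianglesThrough] using hp
  have h₁ : #{p ∈ tri | C v p.1 = C p.1 p.2} ≤ T.maxMonoOut C * T.outDeg v :=
    card_le_mul_card_of_injOn_fibers (M := fun w => {u | T.arc w u ∧ C w u = C v w})
      Prod.fst Prod.snd
      (fun p hp => by
        obtain ⟨hp, hc⟩ := mem_filter.mp hp
        simpa [hc] using ⟨(hmem hp).1, (hmem hp).2.1⟩)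
      (fun _ _ _ _ h => h) fun w _ => T.monoOutDeg_le_maxMonoOut C w _
  have h₂ : #{p ∈ tri | C p.1 p.2 = C p.2 v} ≤ T.maxMonoIn C * T.inDeg v :=
    card_le_mul_card_of_injOn_fibers (t := {u | T.arc u v})
      (M := fun u => {w | T.arc w u ∧ C w u = C u v}) Prod.snd Prod.fst
      (fun p hp => by
        obtain ⟨hp, hc⟩ := mem_filter.mp hp
        simpa [hc] using ⟨(hmem hp).2.2, (hmem hp).2.1⟩)
      (fun _ _ _ _ h => Prod.swap_injective h) fun u _ => T.monoInDeg_le_maxMonoIn C u _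
  have h₃ : #{p ∈ tri | C p.2 v = C v p.1} ≤ T.maxMonoIn C * T.outDeg v :=
    card_le_mul_card_of_injOn_fibers (M := fun w => {u | T.arc u v ∧ C u v = C v w})
      Prod.fst Prod.snd
      (fun p hp => by
        obtain ⟨hp, hc⟩ := mem_filter.mp hp
        simpa [hc] using ⟨(hmem hp).1, (hmem hp).2.2⟩)
      (fun _ _ _ _ h => h) fun w _ => T.monoInDeg_le_maxMonoIn C v _
  have hsub : T.nonRainbowTrianglesThrough C v ⊆ {p ∈ tri | C v p.1 = C p.1 p.2} ∪
      {p ∈ tri | C p.1 p.2 = C p.2 v} ∪ {p ∈ tri | C p.2 v = C v p.1} := by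
    intro p hp
    simp only [nonRainbowTrianglesThrough, mem_filter, mem_union] at hp ⊢
    tauto
  calc #(T.nonRainbowTrianglesThrough C v)
      ≤ #{p ∈ tri | C v p.1 = C p.1 p.2} + #{p ∈ tri | C p.1 p.2 = C p.2 v}
        + #{p ∈ tri | C p.2 v = C v p.1} :=
        (card_le_card hsub).trans <| (card_union_le _ _).trans (by gcongr; exact card_union_le _ _)
    _ ≤ _ := by gcongr

theorem card_rainbowTrianglesThrough_add_card_nonRainbowTrianglesThrough (v : V) :
    #(T.rainbowTrianglesThrough C v) + #(T.nonRainbowTrianglesThrough C v)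
      = #(T.trianglesThrough v) :=
  card_filter_add_card_filter_not _

end Tournament

theorem nonRainbow_lt_triangles_of_le_half (m i d a b : ℚ) (hi : 1 ≤ i) (him : 3 * i < m + 4)
    (hd : m - i ≤ 2 * d) (hdm : 2 * d ≤ m) (ha : 1 ≤ a) (hb : 0 ≤ b)
    (hK : 4 * (m + i) * (2 * a + b) ≤ (m - i) * (m + 2 - i)) :
    2 * ((m - d) * b + m * a) < d * (m + 1 - i - d) := by
  set G : ℚ → ℚ := fun z => z * (m + 1 - i - z) - 2 * ((m - z) * b + m * a) with hG
  have hm : 0 < m := by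
    by_contra! hm
    nlinarith [mul_pos (by linarith : 0 < m + i) (by linarith : 0 < 2 * a + b)]
  have hleft : 0 < G ((m - i) / 2) := by simp only [hG]; nlinarith
  have hright : 0 < G (m / 2) := by
    have : 0 < (m + i) * G (m / 2) := by
      simp only [hG]; nlinarith [mul_pos hm (by linarith : 0 < m + 4 - 3 * i)]
    exact pos_of_mul_pos_right this (by linarith)
  -- `G` is a concave quadratic, so it lies above its chord on `[(m - i) / 2, m / 2]`
  have hchord : i / 2 * G d = G ((m - i) / 2) * (m / 2 - d) + G (m / 2) * (d - (m - i) / 2)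
      + i / 2 * (d - (m - i) / 2) * (m / 2 - d) := by simp only [hG]; ring
  have : 0 < i / 2 * G d := by
    have h₁ := mul_le_mul_of_nonneg_right (min_le_left (G ((m - i) / 2)) (G (m / 2)))
      (by linarith : (0 : ℚ) ≤ m / 2 - d)
    have h₂ := mul_le_mul_of_nonneg_right (min_le_right (G ((m - i) / 2)) (G (m / 2)))
      (by linarith : (0 : ℚ) ≤ d - (m - i) / 2)
    have h₃ := mul_nonneg (mul_nonneg (by linarith : (0 : ℚ) ≤ i / 2)
      (by linarith : (0 : ℚ) ≤ d - (m - i) / 2)) (by linarith : (0 : ℚ) ≤ m / 2 - d)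
    have h₄ : 0 < min (G ((m - i) / 2)) (G (m / 2)) * (i / 2) :=
      mul_pos (lt_min hleft hright) (by linarith)
    linarith
  have := pos_of_mul_pos_right this (by linarith)
  simp only [hG] at this
  linarith

theorem nonRainbow_lt_triangles (n i x y a b t : ℚ) (hi : 1 ≤ i) (hin : i < (n + 3) / 3)
    (hxy : x + y + 1 = n) (hx : n - 1 - i ≤ 2 * x) (hy : n - 1 - i ≤ 2 * y) (ha : 1 ≤ a)
    (hb : 0 ≤ b) (hK : 2 * a + b ≤ (n - 1 - i) * (n + 1 - i) / (4 * (n - 1 + i)))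
    (ht₁ : x * (n - 1 - i + 1 - x) ≤ 2 * t) (ht₂ : y * (n - 1 - i + 1 - y) ≤ 2 * t) :
    b * x + a * y + a * x < t := by
  have hK' : 4 * ((n - 1) + i) * (2 * a + b) ≤ ((n - 1) - i) * ((n - 1) + 2 - i) := by
    rw [le_div_iff₀ (by linarith)] at hK
    linarith
  rcases le_total x y with hle | hle
  · have := nonRainbow_lt_triangles_of_le_half (n - 1) i x a b hi (by linarith) hx
      (by linarith) ha hb hK'
    nlinarith [mul_le_mul_of_nonneg_right hle hb]
  · have := nonRainbow_lt_triangles_of_le_half (n - 1) i y a b hi (by linarith) hy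
      (by linarith) ha hb hK'
    nlinarith

theorem every_vertex_in_rainbow_triangle_of_monochromatic_bound₂_general
    {V : Type} [Fintype V] (n : ℕ) (hn : Fintype.card V = n)
    (T : Tournament V) (C : V → V → ℕ)
    (hirr1 : 1 ≤ T.irreg)
    (hirr2 : (T.irreg : ℚ) < ((n : ℚ) + 3) / 3)
    (hbound : 2 * (T.maxMonoIn C : ℚ) + (T.maxMonoOut C : ℚ)
        ≤ ((n : ℚ) - 1 - (T.irreg : ℚ)) * ((n : ℚ) + 1 - (T.irreg : ℚ))
            / (4 * ((n : ℚ) - 1 + (T.irreg : ℚ)))) :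
    ∀ v : V, (T.rainbowTrianglesThrough C v).Nonempty := by
  intro v
  by_contra hv
  subst hn
  obtain ⟨u, w, huw⟩ := T.exists_arc_of_irreg_pos hirr1
  have hcard := T.card_rainbowTrianglesThrough_add_card_nonRainbowTrianglesThrough C v
  rw [not_nonempty_iff_eq_empty.mp hv, card_empty, zero_add] at hcard
  have hupper : (#(T.trianglesThrough v) : ℚ) ≤ T.maxMonoOut C * T.outDeg v
      + T.maxMonoIn C * T.inDeg v + T.maxMonoIn C * T.outDeg v := by
    exact_mod_cast hcard ▸ T.card_nonRainbowTrianglesThrough_le C v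
  have hlower := nonRainbow_lt_triangles _ _ _ _ _ _ (#(T.trianglesThrough v) : ℚ)
    (by exact_mod_cast hirr1) hirr2 (by exact_mod_cast T.outDeg_add_inDeg v)
    (T.card_sub_irreg_le_two_mul_outDeg v) (T.card_sub_irreg_le_two_mul_inDeg v)
    (by exact_mod_cast T.one_le_maxMonoIn_of_arc C huw) (Nat.cast_nonneg _) hbound
    (T.outDeg_mul_le_two_mul_card_trianglesThrough T.card_sub_irreg_le_two_mul_outDeg v)
    (T.inDeg_mul_le_two_mul_card_trianglesThrough T.card_sub_irreg_le_two_mul_inDeg v)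
  linarith

/-- If `1 ≤ i(T) < (n+3)/3` and
`2Δ^{-mon} + Δ^{+mon} ≤ (n−1−i)(n+1−i)/(4(n−1+i))`, then every vertex lies on a
rainbow triangle. -/
theorem every_vertex_in_rainbow_triangle_of_monochromatic_bound₂
    {V : Type} [Fintype V] (n : ℕ) (hn : Fintype.card V = n)
    (T : Tournament V) (C : V → V → ℕ)
    (hsc : T.StronglyConnected)
    (hmono : T.maxMonoIn C ≤ T.maxMonoOut C)
    (hirr1 : 1 ≤ T.irreg)
    (hirr2 : (T.irreg : ℚ) < ((n : ℚ) + 3) / 3)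
    (hbound : 2 * (T.maxMonoIn C : ℚ) + (T.maxMonoOut C : ℚ)
        ≤ ((n : ℚ) - 1 - (T.irreg : ℚ)) * ((n : ℚ) + 1 - (T.irreg : ℚ))
            / (4 * ((n : ℚ) - 1 + (T.irreg : ℚ)))) :
    ∀ v : V, (T.rainbowTrianglesThrough C v).Nonempty :=
  every_vertex_in_rainbow_triangle_of_monochromatic_bound₂_general n hn T C hirr1 hirr2 hbound
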